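/- Let 𝔸 = (A, ≤, →, Σ) be an implicative algebra with |A| < κ for a strongly inaccessible cardinal κ, and let W, ∈_W, =_W be as defined below. Then there exists σ ∈ Σ such that σ ≤ ⨅_{α,β∈W} ((α =_W β) → (β =_W α)). -/

import Mathlib

universe u

/-- An implicative algebra `𝔸 = (A, ≤, →, Σ)`:  a complete lattice `(A, ≤)` together with an
implication `imp` which is antitone in its first argument, monotone in its second argument and
turns infima in the second argument into infima, and a separator `Sig ⊆ A` which is upward
closed, closed under modus ponens and contains the combinators `K` and `S`. -/
structure ImplicativeAlgebra (A : Type u) [CompleteLattice A] where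
  imp : A → A → A
  imp_antitone : ∀ ⦃a a' b : A⦄, a ≤ a' → imp a' b ≤ imp a b
  imp_monotone : ∀ ⦃a b b' : A⦄, b ≤ b' → imp a b ≤ imp a b'
  imp_sInf : ∀ (a : A) (S : Set A), imp a (sInf S) = ⨅ b ∈ S, imp a b
  Sig : Set A
  Sig_upward : ∀ ⦃a b : A⦄, a ∈ Sig → a ≤ b → b ∈ Sig
  Sig_mp : ∀ ⦃a b : A⦄, imp a b ∈ Sig → a ∈ Sig → b ∈ Sig
  Sig_K : (⨅ a : A, ⨅ b : A, imp a (imp b a)) ∈ Sig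
  Sig_S : (⨅ a : A, ⨅ b : A, ⨅ c : A,
      imp (imp a (imp b c)) (imp (imp a b) (imp a c))) ∈ Sig

namespace ImplicativeAlgebra

variable {A : Type u} [CompleteLattice A]

/-- `a × b := ⨅ x, ((a → (b → x)) → x)`. -/
def times (IA : ImplicativeAlgebra A) (a b : A) : A :=
  ⨅ x : A, IA.imp (IA.imp a (IA.imp b x)) x

/-- `a + b := ⨅ x, ((a → x) → ((b → x) → x))`. -/
def plus (IA : ImplicativeAlgebra A) (a b : A) : A :=
  ⨅ x : A, IA.imp (IA.imp a x) (IA.imp (IA.imp b x) x)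

/-- `∃⃗_{i} f i := ⨅ x, ((⨅ i, (f i → x)) → x)`.  (`∀⃗` is just `⨅`.) -/
def aex (IA : ImplicativeAlgebra A) {ι : Sort*} (f : ι → A) : A :=
  ⨅ x : A, IA.imp (⨅ i, IA.imp (f i) x) x

/-- `φ ⊢_{Σ[I]} ψ` iff `⨅ i, (φ i → ψ i) ∈ Σ`. -/
def SigLe (IA : ImplicativeAlgebra A) {ι : Sort*} (f g : ι → A) : Prop :=
  (⨅ i, IA.imp (f i) (g i)) ∈ IA.Sig

/-- `φ ≡_{Σ[I]} ψ` iff `φ ⊢_{Σ[I]} ψ` and `ψ ⊢_{Σ[I]} φ`. -/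
def SigEquiv (IA : ImplicativeAlgebra A) {ι : Sort*} (f g : ι → A) : Prop :=
  IA.SigLe f g ∧ IA.SigLe g f

end ImplicativeAlgebra

/-- Pre-elements of the cumulative hierarchy of partial functions valued in `A`:
an element is an `A`-labelled family of previously constructed elements, i.e. a partial
function (presented by a family indexed by its domain) from earlier elements to `A`. -/
inductive PreW (A : Type u) : Type (u + 1)
  | mk (ι : Type u) (fam : ι → PreW A) (val : ι → A)

namespace PreW

variable {A : Type u}

/-- The (index type of the) domain of a partial function. -/
def dom : PreW A → Type u
  | ⟨ι, _, _⟩ => ι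

/-- The family of elements of the domain. -/
def fam : (w : PreW A) → w.dom → PreW A
  | ⟨_, f, _⟩ => f

/-- The values in `A` of the partial function. -/
def val : (w : PreW A) → w.dom → A
  | ⟨_, _, v⟩ => v

/-- `w` is hereditarily of size `< κ`:  this carves out exactly the elements of the stage
`W_κ` of the hierarchy (for `κ` inaccessible). -/
def HSmall (κ : Cardinal.{u}) : PreW A → Prop
  | ⟨ι, f, _⟩ => Cardinal.mk ι < κ ∧ ∀ i, HSmall κ (f i)

theorem HSmall.fam {κ : Cardinal.{u}} :
    ∀ {w : PreW A}, w.HSmall κ → ∀ i : w.dom, (w.fam i).HSmall κ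
  | ⟨_, _, _⟩, h, i => h.2 i

/-- The rank of an element of the hierarchy. -/
noncomputable def rank : PreW A → Ordinal.{u}
  | ⟨_, f, _⟩ => ⨆ i, Order.succ (rank (f i))

theorem rank_lt_mk {ι : Type u} (f : ι → PreW A) (v : ι → A) (i : ι) :
    (f i).rank < (PreW.mk ι f v).rank := by
  have h : Order.succ (f i).rank ≤ ⨆ j, Order.succ (f j).rank := Ordinal.le_iSup _ i
  have : (f i).rank < ⨆ j, Order.succ (f j).rank :=
    lt_of_lt_of_le (Order.lt_succ _) h
  simpa [rank] using this

end PreW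

namespace ImplicativeAlgebra

variable {A : Type u} [CompleteLattice A]

/-- `α =_W β`, defined by recursion on rank:
`α =_W β := (α ⊆_W β) × (β ⊆_W α)` where
`α ⊆_W β := ∀⃗_{t ∈ dom α} (α t → (fam α t ∈_W β))` and
`γ ∈_W β := ∃⃗_{s ∈ dom β} (β s × (fam β s =_W γ))`. -/
noncomputable def eqW (IA : ImplicativeAlgebra A) : PreW A → PreW A → A
  | ⟨ι₁, f₁, v₁⟩, ⟨ι₂, f₂, v₂⟩ =>
    IA.times
      (⨅ t : ι₁, IA.imp (v₁ t)
        (IA.aex fun s : ι₂ => IA.times (v₂ s) (IA.eqW (f₂ s) (f₁ t))))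
      (⨅ t : ι₂, IA.imp (v₂ t)
        (IA.aex fun s : ι₁ => IA.times (v₁ s) (IA.eqW (f₁ s) (f₂ t))))
termination_by α β => max α.rank β.rank
decreasing_by
  · exact max_lt (lt_max_of_lt_right (PreW.rank_lt_mk f₂ v₂ s))
      (lt_max_of_lt_left (PreW.rank_lt_mk f₁ v₁ t))
  · exact max_lt (lt_max_of_lt_left (PreW.rank_lt_mk f₁ v₁ s))
      (lt_max_of_lt_right (PreW.rank_lt_mk f₂ v₂ t))

/-- `α ∈_W β := ∃⃗_{s ∈ dom β} (β s × (fam β s =_W α))`. -/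
noncomputable def memW (IA : ImplicativeAlgebra A) (α β : PreW A) : A :=
  IA.aex fun s : β.dom => IA.times (β.val s) (IA.eqW (β.fam s) α)

/-- `α ⊆_W β := ∀⃗_{t ∈ dom α} (α t → (fam α t ∈_W β))`. -/
noncomputable def subW (IA : ImplicativeAlgebra A) (α β : PreW A) : A :=
  ⨅ t : α.dom, IA.imp (α.val t) (IA.memW (α.fam t) β)

end ImplicativeAlgebra

/-- The stage `W = W_κ` of the hierarchy: all hereditarily `< κ`-sized elements. -/
def WSet (A : Type u) (κ : Cardinal.{u}) : Type (u + 1) :=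
  {w : PreW A // w.HSmall κ}

/-- An element of the domain of `w ∈ W`, as an element of `W`. -/
def WSet.fam {A : Type u} {κ : Cardinal.{u}} (w : WSet A κ) (i : w.1.dom) : WSet A κ :=
  ⟨w.1.fam i, w.2.fam i⟩

/-- Formulas (in context of length `n`) of the first-order language of set theory, with
(de Bruijn-style) variables `Fin n`, binary predicates `∈` and `=`, connectives `⊥`, `∧`, `∨`,
`→` and quantifiers `∃`, `∀` (binding the last variable of the enlarged context). -/
inductive SetFormula : ℕ → Type
  | bot {n : ℕ} : SetFormula n
  | mem {n : ℕ} (i j : Fin n) : SetFormula n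
  | eq {n : ℕ} (i j : Fin n) : SetFormula n
  | and {n : ℕ} (φ ψ : SetFormula n) : SetFormula n
  | or {n : ℕ} (φ ψ : SetFormula n) : SetFormula n
  | imp {n : ℕ} (φ ψ : SetFormula n) : SetFormula n
  | ex {n : ℕ} (φ : SetFormula (n + 1)) : SetFormula n
  | all {n : ℕ} (φ : SetFormula (n + 1)) : SetFormula n

namespace SetFormula

/-- Renaming of variables (since the only terms of the language of set theory are variables,
substitution is a special case). -/
def rename : {n m : ℕ} → (Fin n → Fin m) → SetFormula n → SetFormula m
  | _, _, _, .bot => .bot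
  | _, _, f, .mem i j => .mem (f i) (f j)
  | _, _, f, .eq i j => .eq (f i) (f j)
  | _, _, f, .and φ ψ => .and (φ.rename f) (ψ.rename f)
  | _, _, f, .or φ ψ => .or (φ.rename f) (ψ.rename f)
  | _, _, f, .imp φ ψ => .imp (φ.rename f) (ψ.rename f)
  | _, _, f, .ex φ => .ex (φ.rename (Fin.snoc (Fin.castSucc ∘ f) (Fin.last _)))
  | _, _, f, .all φ => .all (φ.rename (Fin.snoc (Fin.castSucc ∘ f) (Fin.last _)))

/-- Universal closure `∀x₁ … ∀xₙ φ` of a formula in context of length `n`. -/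
def allClose : {n : ℕ} → SetFormula n → SetFormula 0
  | 0, φ => φ
  | _ + 1, φ => allClose (.all φ)

end SetFormula

namespace ImplicativeAlgebra

variable {A : Type u} [CompleteLattice A]

/-- The interpretation `‖φ[x₁,…,xₙ]‖ : Wⁿ → A` of a formula in context, by recursion on the
structure of `φ`:  atomic formulas are interpreted by `∈_W` and `=_W`, `∧` by `×`, `∨` by `+`,
`→` by `→`, `∃` by `∃⃗` over `W` and `∀` by `∀⃗` (i.e. `⨅`) over `W`. -/
noncomputable def interp (IA : ImplicativeAlgebra A) (κ : Cardinal.{u}) :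
    {n : ℕ} → SetFormula n → (Fin n → WSet A κ) → A
  | _, .bot, _ => ⊥
  | _, .mem i j, v => IA.memW (v i).1 (v j).1
  | _, .eq i j, v => IA.eqW (v i).1 (v j).1
  | _, .and φ ψ, v => IA.times (IA.interp κ φ v) (IA.interp κ ψ v)
  | _, .or φ ψ, v => IA.plus (IA.interp κ φ v) (IA.interp κ ψ v)
  | _, .imp φ ψ, v => IA.imp (IA.interp κ φ v) (IA.interp κ ψ v)
  | _, .ex φ, v => IA.aex fun β : WSet A κ => IA.interp κ φ (Fin.snoc v β)
  | _, .all φ, v => ⨅ β : WSet A κ, IA.interp κ φ (Fin.snoc v β)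

end ImplicativeAlgebra

/-!
The two conjuncts of `α =_W β` are those of `β =_W α` in the other order, so it suffices to
realize `a × b → b × a` uniformly in `a` and `b`. The swap combinator `λ p k, p (λ x y, k y x)`
does this, and being built from `S` and `K` by application it lies in `Σ`.
-/

namespace ImplicativeAlgebra

variable {A : Type u} [CompleteLattice A] (IA : ImplicativeAlgebra A)

lemma eqW_eq_times_subW (α β : PreW A) :
    IA.eqW α β = IA.times (IA.subW α β) (IA.subW β α) := by
  obtain ⟨ι₁, f₁, v₁⟩ := α
  obtain ⟨ι₂, f₂, v₂⟩ := β
  rw [eqW]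
  rfl

def app (a b : A) : A := sInf {c | a ≤ IA.imp b c}

lemma app_le_iff {a b c : A} : IA.app a b ≤ c ↔ a ≤ IA.imp b c := by
  refine ⟨fun h => ?_, fun h => sInf_le h⟩
  have hle : a ≤ IA.imp b (IA.app a b) := by
    rw [app, IA.imp_sInf]
    exact le_iInf₂ fun _ hc => hc
  exact hle.trans (IA.imp_monotone h)

lemma app_app_le_iff {a b c d : A} : IA.app (IA.app a b) c ≤ d ↔ a ≤ IA.imp b (IA.imp c d) := by
  rw [app_le_iff, app_le_iff]

lemma le_imp_app (a b : A) : a ≤ IA.imp b (IA.app a b) :=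
  (IA.app_le_iff).1 le_rfl

lemma app_mono {a a' b b' : A} (ha : a ≤ a') (hb : b ≤ b') : IA.app a b ≤ IA.app a' b' :=
  (IA.app_le_iff).2 (ha.trans ((IA.le_imp_app a' b').trans (IA.imp_antitone hb)))

lemma app_mem {a b : A} (ha : a ∈ IA.Sig) (hb : b ∈ IA.Sig) : IA.app a b ∈ IA.Sig :=
  IA.Sig_mp (IA.Sig_upward ha (IA.le_imp_app a b)) hb

def K : A := ⨅ a : A, ⨅ b : A, IA.imp a (IA.imp b a)

def S : A := ⨅ a : A, ⨅ b : A, ⨅ c : A,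
    IA.imp (IA.imp a (IA.imp b c)) (IA.imp (IA.imp a b) (IA.imp a c))

lemma K_mem : IA.K ∈ IA.Sig := IA.Sig_K

lemma S_mem : IA.S ∈ IA.Sig := IA.Sig_S

lemma app_K (a b : A) : IA.app (IA.app IA.K a) b ≤ a :=
  (IA.app_app_le_iff).2 ((iInf_le _ a).trans (iInf_le _ b))

lemma app_S (a b c : A) :
    IA.app (IA.app (IA.app IA.S a) b) c ≤ IA.app (IA.app a c) (IA.app b c) := by
  set d := IA.app (IA.app a c) (IA.app b c)
  have ha : a ≤ IA.imp c (IA.imp (IA.app b c) d) := (IA.app_app_le_iff).1 le_rfl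
  have hS : IA.S ≤ IA.imp (IA.imp c (IA.imp (IA.app b c) d))
      (IA.imp (IA.imp c (IA.app b c)) (IA.imp c d)) :=
    ((iInf_le _ c).trans (iInf_le _ _)).trans (iInf_le _ d)
  have hSa : IA.app IA.S a ≤ IA.imp b (IA.imp c d) :=
    (IA.app_le_iff).2 ((hS.trans (IA.imp_antitone ha)).trans
      (IA.imp_monotone (IA.imp_antitone (IA.le_imp_app b c))))
  exact (IA.app_app_le_iff).2 hSa

def B : A := IA.app (IA.app IA.S (IA.app IA.K IA.S)) IA.K

lemma B_mem : IA.B ∈ IA.Sig :=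
  IA.app_mem (IA.app_mem IA.S_mem (IA.app_mem IA.K_mem IA.S_mem)) IA.K_mem

lemma app_B (f g x : A) : IA.app (IA.app (IA.app IA.B f) g) x ≤ IA.app f (IA.app g x) := by
  have hBf : IA.app IA.B f ≤ IA.app IA.S (IA.app IA.K f) :=
    (IA.app_S _ _ f).trans (IA.app_mono (IA.app_K _ _) le_rfl)
  calc IA.app (IA.app (IA.app IA.B f) g) x
      ≤ IA.app (IA.app (IA.app IA.S (IA.app IA.K f)) g) x :=
        IA.app_mono (IA.app_mono hBf le_rfl) le_rfl
    _ ≤ IA.app f (IA.app g x) := (IA.app_S _ _ _).trans (IA.app_mono (IA.app_K _ _) le_rfl)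

def C : A := IA.app (IA.app IA.S (IA.app (IA.app IA.B IA.B) IA.S)) (IA.app IA.K IA.K)

lemma C_mem : IA.C ∈ IA.Sig :=
  IA.app_mem (IA.app_mem IA.S_mem (IA.app_mem (IA.app_mem IA.B_mem IA.B_mem) IA.S_mem))
    (IA.app_mem IA.K_mem IA.K_mem)

lemma app_C (f a b : A) : IA.app (IA.app (IA.app IA.C f) a) b ≤ IA.app (IA.app f b) a := by
  have hCf : IA.app IA.C f ≤ IA.app (IA.app IA.B (IA.app IA.S f)) IA.K :=
    (IA.app_S _ _ f).trans (IA.app_mono (IA.app_B _ _ f) (IA.app_K _ _))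
  have hCfa : IA.app (IA.app IA.C f) a ≤ IA.app (IA.app IA.S f) (IA.app IA.K a) :=
    (IA.app_mono hCf le_rfl).trans (IA.app_B _ _ a)
  calc IA.app (IA.app (IA.app IA.C f) a) b
      ≤ IA.app (IA.app f b) (IA.app (IA.app IA.K a) b) :=
        (IA.app_mono hCfa le_rfl).trans (IA.app_S _ _ _)
    _ ≤ IA.app (IA.app f b) a := IA.app_mono le_rfl (IA.app_K a b)

/-- `swap = C B C`, so that `swap p k = B p C k = p (C k)`. -/
def swap : A := IA.app (IA.app IA.C IA.B) IA.C

lemma swap_mem : IA.swap ∈ IA.Sig :=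
  IA.app_mem (IA.app_mem IA.C_mem IA.B_mem) IA.C_mem

lemma app_swap (p k : A) : IA.app (IA.app IA.swap p) k ≤ IA.app p (IA.app IA.C k) :=
  (IA.app_mono (IA.app_C _ _ _) le_rfl).trans (IA.app_B _ _ _)

lemma swap_le_imp_times (a b : A) : IA.swap ≤ IA.imp (IA.times a b) (IA.times b a) := by
  refine (IA.app_le_iff).1 (le_iInf fun x => (IA.app_le_iff).1 ?_)
  have hCk : IA.app IA.C (IA.imp b (IA.imp a x)) ≤ IA.imp a (IA.imp b x) :=
    (IA.app_app_le_iff).1 ((IA.app_C _ _ _).trans ((IA.app_app_le_iff).2 le_rfl))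
  have hab : IA.times a b ≤ IA.imp (IA.app IA.C (IA.imp b (IA.imp a x))) x :=
    (iInf_le _ x).trans (IA.imp_antitone hCk)
  exact (IA.app_swap _ _).trans ((IA.app_le_iff).2 hab)

end ImplicativeAlgebra

theorem stmt2_general {A : Type u} [CompleteLattice A] (IA : ImplicativeAlgebra A)
    (κ : Cardinal.{u}) :
    ∃ σ ∈ IA.Sig, σ ≤ ⨅ α : WSet A κ, ⨅ β : WSet A κ,
      IA.imp (IA.eqW α.1 β.1) (IA.eqW β.1 α.1) := by
  refine ⟨IA.swap, IA.swap_mem, le_iInf₂ fun α β => ?_⟩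
  rw [IA.eqW_eq_times_subW α.1, IA.eqW_eq_times_subW β.1]
  exact IA.swap_le_imp_times _ _

theorem stmt2 {A : Type u} [CompleteLattice A] (IA : ImplicativeAlgebra A)
    (κ : Cardinal.{u}) (hκ : κ.IsInaccessible) (hA : Cardinal.mk A < κ) :
    ∃ σ ∈ IA.Sig, σ ≤ ⨅ α : WSet A κ, ⨅ β : WSet A κ,
      IA.imp (IA.eqW α.1 β.1) (IA.eqW β.1 α.1) :=
  stmt2_general IA κ
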